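/- Let X be an a-normal space with denominator function ζ, let α ≤ β be real numbers, and let (D,(r◁,r▷)_{r ∈ D}) be an [α,β]-draft on X with D a closed subset of ℝ. Then the draft admits a realisation f : X → [α,β] that is continuous and decreases denominators, i.e., den(f(x)) divides ζ(x) for every x ∈ X. -/

import Mathlib

/-!
The realisation is `f x = sup {r ∈ E | x ∈ r▷}` for a draft on a set `E ⊇ D` that is dense in
`[α, β]`. Density makes `f` continuous, and it squeezes `f x` between nodes `r ≤ s` with
`x ∈ r▷ ∩ s◁` arbitrarily close to `f x`; so `f x` is a limit of reals whose denominator divides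
`ζ x`, and these reals form a closed set.

The dense draft comes from inserting the points of a dense sequence one at a time. A point `t`
outside the closed set `E` lies in a gap `(r, s)` of `E`. A node at `t` is obtained by separating,
in the sense of (N3'), the set `r◁` enlarged by the points of `r▷ ∩ s◁` that cannot be sent into
`[t, s]` from `s▷` enlarged by those that cannot be sent into `[r, t]`; both are closed because
`AC` of a nondegenerate interval is open. The successive drafts extend one another, and their
union is again a draft.
-/

open Classical in
/-- The denominator of a real number: the reduced denominator if rational, `0` if irrational. -/
noncomputable def den (r : ℝ) : ℕ :=
  if h : ∃ q : ℚ, (q : ℝ) = r then h.choose.den else 0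

/-- `AC ζ Λ`: the points of the a-space `(X, ζ)` that may be sent into `Λ ⊆ ℝ` by a
denominator-decreasing map. -/
def AC {X : Type*} (ζ : X → ℕ) (Λ : Set ℝ) : Set X := {x | ∃ l ∈ Λ, den l ∣ ζ x}

/-- An a-normal space structure on a topological space `X` with denominator function `ζ`. -/
def ANormal {X : Type*} [TopologicalSpace X] (ζ : X → ℕ) : Prop :=
  CompactSpace X ∧ T2Space X ∧
  (∀ n : ℕ, IsClosed {x : X | ζ x ∣ n}) ∧
  ∀ x y : X, x ≠ y → ∃ U V : Set X, IsOpen U ∧ IsOpen V ∧ x ∈ U ∧ y ∈ V ∧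
    Disjoint U V ∧ ∀ z ∈ (U ∪ V)ᶜ, ζ z = 0

/-- An `[α,β]`-draft on an a-space `(X, ζ)`. -/
def IsDraft {X : Type*} [TopologicalSpace X] (ζ : X → ℕ) (α β : ℝ)
    (D : Set ℝ) (down up : ℝ → Set X) : Prop :=
  D ⊆ Set.Icc α β ∧ α ∈ D ∧ β ∈ D ∧
  (∀ r ∈ D, IsClosed (down r)) ∧ (∀ r ∈ D, IsClosed (up r)) ∧
  up α = Set.univ ∧ down β = Set.univ ∧
  (∀ r ∈ D, down r ∪ up r = Set.univ) ∧
  (∀ r ∈ D, ∀ s ∈ D, r < s → down r ∩ up s = ∅) ∧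
  (∀ r ∈ D, ∀ s ∈ D, r ≤ s → up r ∩ down s ⊆ AC ζ (Set.Icc r s))

/-- A realisation of an `[α,β]`-draft. -/
def IsRealisation {X : Type*} (α β : ℝ) (D : Set ℝ) (down up : ℝ → Set X)
    (f : X → ℝ) : Prop :=
  (∀ x, f x ∈ Set.Icc α β) ∧
  ∀ r ∈ D, (∀ x ∈ down r, f x ∈ Set.Icc α r) ∧ (∀ x ∈ up r, f x ∈ Set.Icc r β)

open Set Function

lemma den_ratCast (q : ℚ) : den q = q.den := by
  have h : ∃ p : ℚ, (p : ℝ) = q := ⟨q, rfl⟩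
  unfold den
  rw [dif_pos h, Rat.cast_injective h.choose_spec]

lemma den_dvd_iff {r : ℝ} {n : ℕ} (hn : n ≠ 0) : den r ∣ n ↔ ∃ k : ℤ, r = k / n := by
  constructor
  · intro h
    rw [den] at h
    split_ifs at h with hq
    · have hqr := hq.choose_spec
      generalize hq.choose = q at h hqr
      obtain ⟨m, rfl⟩ := h
      have hm0 : (m : ℝ) ≠ 0 := by rintro h0; simp_all
      refine ⟨q.num * m, hqr ▸ ?_⟩
      rw [Rat.cast_def]
      push_cast
      field_simp
    · exact absurd (Nat.eq_zero_of_zero_dvd h) hn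
  · rintro ⟨k, rfl⟩
    have hq : ((k : ℝ) / n) = ((k / n : ℚ) : ℝ) := by push_cast; rfl
    have h := Rat.den_dvd k n
    rw [Rat.divInt_eq_div] at h
    rw [hq, den_ratCast]
    exact_mod_cast h

lemma isClosed_setOf_den_dvd (n : ℕ) : IsClosed {r : ℝ | den r ∣ n} := by
  rcases eq_or_ne n 0 with rfl | hn
  · simp only [dvd_zero, ofPred_true, isClosed_univ]
  have h : {r : ℝ | den r ∣ n} = (· * (n : ℝ)) ⁻¹' range ((↑) : ℤ → ℝ) := by
    ext r
    have hn' : (n : ℝ) ≠ 0 := Nat.cast_ne_zero.2 hn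
    simp only [mem_ofPred_eq, den_dvd_iff hn, mem_preimage, mem_range, eq_div_iff hn', eq_comm]
  rw [h]
  exact Int.isClosedEmbedding_coe_real.isClosed_range.preimage (continuous_mul_const _)

lemma exists_den_dvd_mem_Icc {r t : ℝ} {n : ℕ} (hn : 0 < n) (h : 1 ≤ n * (t - r)) :
    ∃ l ∈ Icc r t, den l ∣ n := by
  have hn' : (0 : ℝ) < n := Nat.cast_pos.2 hn
  refine ⟨⌈r * n⌉ / n, ⟨?_, ?_⟩, (den_dvd_iff hn.ne').2 ⟨_, rfl⟩⟩
  · rw [le_div_iff₀ hn']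
    exact Int.le_ceil _
  · rw [div_le_iff₀ hn']
    linarith [Int.ceil_lt_add_one (r * n)]

section AC

variable {X : Type*} {ζ : X → ℕ}

lemma AC_mono {Λ Λ' : Set ℝ} (h : Λ ⊆ Λ') : AC ζ Λ ⊆ AC ζ Λ' :=
  fun _ ⟨l, hl, hd⟩ => ⟨l, h hl, hd⟩

lemma AC_union (Λ Λ' : Set ℝ) : AC ζ (Λ ∪ Λ') = AC ζ Λ ∪ AC ζ Λ' := by
  ext x
  simp only [AC, mem_union, mem_ofPred_eq, or_and_right, exists_or]

lemma mem_AC_of_eq_zero {x : X} (hx : ζ x = 0) {Λ : Set ℝ} (hΛ : Λ.Nonempty) : x ∈ AC ζ Λ :=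
  let ⟨l, hl⟩ := hΛ
  ⟨l, hl, hx ▸ dvd_zero _⟩

lemma AC_Icc_subset_union {r t s : ℝ} (hrt : r ≤ t) (hts : t ≤ s) :
    AC ζ (Icc r s) ⊆ AC ζ (Icc r t) ∪ AC ζ (Icc t s) := by
  rw [← AC_union, Icc_union_Icc_eq_Icc hrt hts]

lemma inter_eq_empty_trans {da db ub uc : Set X} (hb : db ∪ ub = univ)
    (hab : da ∩ ub = ∅) (hbc : db ∩ uc = ∅) : da ∩ uc = ∅ := by
  refine eq_empty_iff_forall_notMem.2 fun x ⟨ha, hc⟩ => ?_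
  rcases eq_univ_iff_forall.1 hb x with h | h
  · exact (hbc.subset ⟨h, hc⟩ : x ∈ (∅ : Set X))
  · exact (hab.subset ⟨ha, h⟩ : x ∈ (∅ : Set X))

lemma inter_subset_AC_trans {ua db ub dc : Set X} {a b c : ℝ} (hb : db ∪ ub = univ)
    (hab : a ≤ b) (hbc : b ≤ c) (h₁ : ua ∩ db ⊆ AC ζ (Icc a b))
    (h₂ : ub ∩ dc ⊆ AC ζ (Icc b c)) : ua ∩ dc ⊆ AC ζ (Icc a c) := by
  rintro x ⟨ha, hc⟩
  rcases eq_univ_iff_forall.1 hb x with h | h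
  · exact AC_mono (Icc_subset_Icc_right hbc) (h₁ ⟨ha, h⟩)
  · exact AC_mono (Icc_subset_Icc_left hab) (h₂ ⟨h, hc⟩)

variable [TopologicalSpace X]

/-- The set of `n` that no denominator from `Λ` divides is closed under divisors, so the
complement of `AC ζ Λ` is the union of the sets `{x | ζ x ∣ n}` over these `n`. -/
lemma isOpen_AC (hζ : ∀ n, IsClosed {x : X | ζ x ∣ n}) {Λ : Set ℝ}
    (hΛ : {n : ℕ | ∀ l ∈ Λ, ¬ den l ∣ n}.Finite) : IsOpen (AC ζ Λ) := by
  have h : (AC ζ Λ)ᶜ = ⋃ n ∈ {n : ℕ | ∀ l ∈ Λ, ¬ den l ∣ n}, {x | ζ x ∣ n} := by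
    ext x
    simp only [AC, mem_compl_iff, mem_ofPred_eq, not_exists, not_and, mem_iUnion, exists_prop]
    exact ⟨fun hx => ⟨ζ x, hx, dvd_rfl⟩,
      fun ⟨n, hn, hxn⟩ l hl hl' => hn l hl (hl'.trans hxn)⟩
  rw [← isClosed_compl_iff, h]
  exact hΛ.isClosed_biUnion fun n _ => hζ n

lemma isOpen_AC_Icc (hζ : ∀ n, IsClosed {x : X | ζ x ∣ n}) {r t : ℝ} (hrt : r < t) :
    IsOpen (AC ζ (Icc r t)) := by
  refine isOpen_AC hζ ((finite_Iic ⌈(t - r)⁻¹⌉₊).subset fun n hbad => ?_)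
  by_contra hN
  have hn : 0 < n := by
    rcases Nat.eq_zero_or_pos n with rfl | hn
    · exact absurd (dvd_zero _) (hbad r ⟨le_rfl, hrt.le⟩)
    · exact hn
  have h1 : 1 ≤ n * (t - r) := by
    have hle : (t - r)⁻¹ ≤ n := (Nat.le_ceil _).trans (by exact_mod_cast (not_le.1 hN).le)
    have := mul_le_mul_of_nonneg_right hle (sub_pos.2 hrt).le
    rwa [inv_mul_cancel₀ (sub_pos.2 hrt).ne'] at this
  obtain ⟨l, hl, hld⟩ := exists_den_dvd_mem_Icc hn h1
  exact hbad l hl hld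

end AC

section Separation

variable {X : Type*} [TopologicalSpace X] {ζ : X → ℕ}

/-- Separation of `A` and `B` as in axiom (N3'). -/
def ZeroSeparatedNhds (ζ : X → ℕ) (A B : Set X) : Prop :=
  ∃ U V : Set X, IsOpen U ∧ IsOpen V ∧ A ⊆ U ∧ B ⊆ V ∧ Disjoint U V ∧
    ∀ z ∈ (U ∪ V)ᶜ, ζ z = 0

lemma ZeroSeparatedNhds.symm {A B : Set X} (h : ZeroSeparatedNhds ζ A B) :
    ZeroSeparatedNhds ζ B A :=
  let ⟨U, V, hU, hV, hAU, hBV, hUV, hz⟩ := h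
  ⟨V, U, hV, hU, hBV, hAU, hUV.symm, by rwa [union_comm]⟩

lemma ZeroSeparatedNhds.union_left {A A' B : Set X} (h : ZeroSeparatedNhds ζ A B)
    (h' : ZeroSeparatedNhds ζ A' B) : ZeroSeparatedNhds ζ (A ∪ A') B := by
  obtain ⟨U, V, hU, hV, hAU, hBV, hUV, hz⟩ := h
  obtain ⟨U', V', hU', hV', hAU', hBV', hUV', hz'⟩ := h'
  refine ⟨U ∪ U', V ∩ V', hU.union hU', hV.inter hV', union_subset_union hAU hAU',
    subset_inter hBV hBV', disjoint_union_left.2 ⟨hUV.mono_right inter_subset_left,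
      hUV'.mono_right inter_subset_right⟩, fun z hzUV => ?_⟩
  simp only [mem_compl_iff, mem_union, mem_inter_iff, not_or, not_and_or] at hzUV
  obtain ⟨⟨hzU, hzU'⟩, hzV | hzV'⟩ := hzUV
  · exact hz z (by simp [hzU, hzV])
  · exact hz' z (by simp [hzU', hzV'])

lemma ZeroSeparatedNhds.of_isCompact_left {A B : Set X} (hA : IsCompact A)
    (h : ∀ x ∈ A, ZeroSeparatedNhds ζ {x} B) : ZeroSeparatedNhds ζ A B := by
  refine hA.induction_on ?_ ?_ (fun _ _ => ZeroSeparatedNhds.union_left) fun x hx => ?_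
  · exact ⟨∅, univ, isOpen_empty, isOpen_univ, subset_rfl, subset_univ B,
      empty_disjoint _, by simp⟩
  · exact fun s t hst ⟨U, V, hU, hV, htU, hBV, hUV, hz⟩ =>
      ⟨U, V, hU, hV, hst.trans htU, hBV, hUV, hz⟩
  · obtain ⟨U, V, hU, hV, hxU, hBV, hUV, hz⟩ := h x hx
    exact ⟨U, mem_nhdsWithin_of_mem_nhds (hU.mem_nhds (singleton_subset_iff.1 hxU)),
      U, V, hU, hV, subset_rfl, hBV, hUV, hz⟩

lemma ANormal.zeroSeparatedNhds (hX : ANormal ζ) {A B : Set X} (hA : IsClosed A)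
    (hB : IsClosed B) (hAB : Disjoint A B) : ZeroSeparatedNhds ζ A B := by
  have := hX.1
  refine .of_isCompact_left hA.isCompact fun x hx => ZeroSeparatedNhds.symm <|
    .of_isCompact_left hB.isCompact fun y hy => ?_
  obtain ⟨U, V, hU, hV, hyU, hxV, hUV, hz⟩ :=
    hX.2.2.2 y x fun hyx => hAB.notMem_of_mem_left hx (hyx ▸ hy)
  exact ⟨U, V, hU, hV, singleton_subset_iff.2 hyU, singleton_subset_iff.2 hxV, hUV, hz⟩

end Separation

section Insertion

variable {X : Type*} [TopologicalSpace X] {ζ : X → ℕ}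

lemma exists_node_between (hX : ANormal ζ) {r t s : ℝ} (hrt : r < t) (hts : t < s)
    {dr ur ds us : Set X} (hdr : IsClosed dr) (hur : IsClosed ur) (hds : IsClosed ds)
    (hus : IsClosed us) (hr : dr ∪ ur = univ) (hs : ds ∪ us = univ)
    (hrr : ur ∩ dr ⊆ AC ζ (Icc r r)) (hss : us ∩ ds ⊆ AC ζ (Icc s s))
    (hrs : dr ∩ us = ∅) (hrs' : ur ∩ ds ⊆ AC ζ (Icc r s)) :
    ∃ dt ut : Set X, IsClosed dt ∧ IsClosed ut ∧ dt ∪ ut = univ ∧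
      ut ∩ dt ⊆ AC ζ (Icc t t) ∧ dr ∩ ut = ∅ ∧ ur ∩ dt ⊆ AC ζ (Icc r t) ∧
      dt ∩ us = ∅ ∧ ut ∩ ds ⊆ AC ζ (Icc t s) := by
  have hζ := hX.2.2.1
  have hA : IsClosed (dr ∪ (ur ∩ ds) \ AC ζ (Icc t s)) :=
    hdr.union ((hur.inter hds).sdiff (isOpen_AC_Icc hζ hts))
  have hB : IsClosed (us ∪ (ur ∩ ds) \ AC ζ (Icc r t)) :=
    hus.union ((hur.inter hds).sdiff (isOpen_AC_Icc hζ hrt))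
  have hAB : Disjoint (dr ∪ (ur ∩ ds) \ AC ζ (Icc t s)) (us ∪ (ur ∩ ds) \ AC ζ (Icc r t)) := by
    rw [disjoint_left]
    rintro x (hxr | ⟨hxC, hxts⟩) (hxs | ⟨hxC', hxrt⟩)
    · exact (hrs.subset ⟨hxr, hxs⟩ : x ∈ (∅ : Set X))
    · exact hxrt (AC_mono (Icc_subset_Icc_right hrt.le) (hrr ⟨hxC'.1, hxr⟩))
    · exact hxts (AC_mono (Icc_subset_Icc_left hts.le) (hss ⟨hxs, hxC.2⟩))
    · exact (AC_Icc_subset_union hrt.le hts.le (hrs' hxC)).elim hxrt hxts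
  obtain ⟨U, V, hU, hV, hAU, hBV, hUV, hz⟩ := hX.zeroSeparatedNhds hA hB hAB
  refine ⟨Vᶜ, Uᶜ, hV.isClosed_compl, hU.isClosed_compl, ?_, fun x hx => ?_, ?_, ?_, ?_, ?_⟩
  · rw [← compl_inter, hUV.symm.inter_eq, compl_empty]
  · exact mem_AC_of_eq_zero (hz x (by rwa [compl_union])) (nonempty_Icc.2 le_rfl)
  · exact (disjoint_compl_right_iff_subset.2 (subset_union_left.trans hAU)).inter_eq
  · rintro x ⟨hxr, hxV⟩
    by_contra hx
    have hxs : x ∈ ds :=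
      (eq_univ_iff_forall.1 hs x).resolve_right fun h => hxV (hBV (Or.inl h))
    exact hxV (hBV (Or.inr ⟨⟨hxr, hxs⟩, hx⟩))
  · exact (disjoint_compl_left_iff_subset.2 (subset_union_left.trans hBV)).inter_eq
  · rintro x ⟨hxU, hxs⟩
    by_contra hx
    have hxr : x ∈ ur :=
      (eq_univ_iff_forall.1 hr x).resolve_left fun h => hxU (hAU (Or.inl h))
    exact hxU (hAU (Or.inr ⟨⟨hxr, hxs⟩, hx⟩))

end Insertion

lemma Monotone.eqOn_of_le {α β : Type*} {E : ℕ → Set α} (hE : Monotone E) {f : ℕ → α → β}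
    (hf : ∀ n, EqOn (f (n + 1)) (f n) (E n)) {m n : ℕ} (hmn : m ≤ n) : EqOn (f n) (f m) (E m) := by
  induction n, hmn using Nat.le_induction with
  | base => exact eqOn_refl _ _
  | succ n hmn ih => exact ((hf n).mono (hE hmn)).trans ih

lemma IsClosed.exists_gap_around {E : Set ℝ} (hE : IsClosed E) {a b t : ℝ} (ha : a ∈ E)
    (hat : a ≤ t) (hb : b ∈ E) (htb : t ≤ b) (ht : t ∉ E) :
    ∃ r ∈ E, ∃ s ∈ E, r < t ∧ t < s ∧ ∀ e ∈ E, e ≤ r ∨ s ≤ e := by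
  have hbdd : BddAbove (E ∩ Iic t) := ⟨t, fun _ h => h.2⟩
  have hbdd' : BddBelow (E ∩ Ici t) := ⟨t, fun _ h => h.2⟩
  have hr := (hE.inter isClosed_Iic).csSup_mem ⟨a, ha, hat⟩ hbdd
  have hs := (hE.inter isClosed_Ici).csInf_mem ⟨b, hb, htb⟩ hbdd'
  refine ⟨_, hr.1, _, hs.1, hr.2.lt_of_ne fun h => ht (h ▸ hr.1),
    hs.2.lt_of_ne' fun h => ht (h ▸ hs.1), fun e he => ?_⟩
  rcases le_total e t with het | hte
  · exact Or.inl (le_csSup hbdd ⟨he, het⟩)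
  · exact Or.inr (csInf_le hbdd' ⟨he, hte⟩)

section Extension

variable {X : Type*} [TopologicalSpace X] {ζ : X → ℕ} {α β : ℝ} {E : Set ℝ}
  {dn up : ℝ → Set X}

lemma IsDraft.insert_update (h : IsDraft ζ α β E dn up) {t : ℝ} (ht : t ∈ Icc α β) (htE : t ∉ E)
    {dt ut : Set X} (hdt : IsClosed dt) (hut : IsClosed ut) (hcov : dt ∪ ut = univ)
    (htt : ut ∩ dt ⊆ AC ζ (Icc t t))
    (hlow : ∀ e ∈ E, e < t → dn e ∩ ut = ∅ ∧ up e ∩ dt ⊆ AC ζ (Icc e t))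
    (hhigh : ∀ e ∈ E, t < e → dt ∩ up e = ∅ ∧ ut ∩ dn e ⊆ AC ζ (Icc t e)) :
    IsDraft ζ α β (insert t E) (update dn t dt) (update up t ut) := by
  obtain ⟨hsub, hα, hβ, hdc, huc, hupα, hdnβ, hecov, hdisj, hAC⟩ := h
  have hne : ∀ e ∈ E, e ≠ t := fun e he het => htE (het ▸ he)
  refine ⟨insert_subset ht hsub, mem_insert_of_mem _ hα, mem_insert_of_mem _ hβ, ?_, ?_,
    by rwa [update_of_ne (hne α hα)], by rwa [update_of_ne (hne β hβ)], ?_, ?_, ?_⟩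
  · rintro e (rfl | he)
    · rwa [update_self]
    · rw [update_of_ne (hne e he)]; exact hdc e he
  · rintro e (rfl | he)
    · rwa [update_self]
    · rw [update_of_ne (hne e he)]; exact huc e he
  · rintro e (rfl | he)
    · rwa [update_self, update_self]
    · rw [update_of_ne (hne e he), update_of_ne (hne e he)]; exact hecov e he
  · rintro a (rfl | ha) b (rfl | hb) hab
    · exact absurd hab (lt_irrefl _)
    · rw [update_self, update_of_ne (hne b hb)]; exact (hhigh b hb hab).1
    · rw [update_self, update_of_ne (hne a ha)]; exact (hlow a ha hab).1
    · rw [update_of_ne (hne a ha), update_of_ne (hne b hb)]; exact hdisj a ha b hb hab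
  · rintro a (rfl | ha) b (rfl | hb) hab
    · rwa [update_self, update_self]
    · rw [update_self, update_of_ne (hne b hb)]
      exact (hhigh b hb (hab.lt_of_ne (hne b hb).symm)).2
    · rw [update_self, update_of_ne (hne a ha)]
      exact (hlow a ha (hab.lt_of_ne (hne a ha))).2
    · rw [update_of_ne (hne a ha), update_of_ne (hne b hb)]; exact hAC a ha b hb hab

lemma IsDraft.exists_insert_of_gap (hX : ANormal ζ) (h : IsDraft ζ α β E dn up)
    {r s t : ℝ} (hr : r ∈ E) (hs : s ∈ E) (hrt : r < t) (hts : t < s)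
    (hgap : ∀ e ∈ E, e ≤ r ∨ s ≤ e) :
    ∃ dn' up', IsDraft ζ α β (insert t E) dn' up' ∧ EqOn dn' dn E ∧ EqOn up' up E := by
  obtain ⟨hsub, -, -, hdc, huc, -, -, hcov, hdisj, hAC⟩ := id h
  have htE : t ∉ E := fun ht => (hgap t ht).elim hrt.not_ge hts.not_ge
  have hne : ∀ e ∈ E, e ≠ t := fun e he het => htE (het ▸ he)
  obtain ⟨dt, ut, hdt, hut, htcov, htt, hrt₁, hrt₂, hts₁, hts₂⟩ :=
    exists_node_between hX hrt hts (hdc r hr) (huc r hr) (hdc s hs) (huc s hs) (hcov r hr)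
      (hcov s hs) (hAC r hr r hr le_rfl) (hAC s hs s hs le_rfl)
      (hdisj r hr s hs (hrt.trans hts)) (hAC r hr s hs (hrt.trans hts).le)
  have hlow : ∀ e ∈ E, e < t → dn e ∩ ut = ∅ ∧ up e ∩ dt ⊆ AC ζ (Icc e t) := by
    intro e he het
    rcases ((hgap e he).resolve_right fun hse => (het.trans hts).not_ge hse).eq_or_lt
      with rfl | her
    · exact ⟨hrt₁, hrt₂⟩
    · exact ⟨inter_eq_empty_trans (hcov r hr) (hdisj e he r hr her) hrt₁,
        inter_subset_AC_trans (hcov r hr) her.le hrt.le (hAC e he r hr her.le) hrt₂⟩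
  have hhigh : ∀ e ∈ E, t < e → dt ∩ up e = ∅ ∧ ut ∩ dn e ⊆ AC ζ (Icc t e) := by
    intro e he hte
    rcases ((hgap e he).resolve_left fun her => (hrt.trans hte).not_ge her).eq_or_lt
      with rfl | hse
    · exact ⟨hts₁, hts₂⟩
    · exact ⟨inter_eq_empty_trans (hcov s hs) hts₁ (hdisj s hs e he hse),
        inter_subset_AC_trans (hcov s hs) hts.le hse.le hts₂ (hAC s hs e he hse.le)⟩
  have ht : t ∈ Icc α β := ⟨(hsub hr).1.trans hrt.le, hts.le.trans (hsub hs).2⟩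
  exact ⟨_, _, h.insert_update ht htE hdt hut htcov htt hlow hhigh,
    fun e he => update_of_ne (hne e he) _ _, fun e he => update_of_ne (hne e he) _ _⟩

lemma IsDraft.exists_insert (hX : ANormal ζ) (h : IsDraft ζ α β E dn up) (hE : IsClosed E)
    {t : ℝ} (ht : t ∈ Icc α β) :
    ∃ dn' up', IsDraft ζ α β (insert t E) dn' up' ∧ EqOn dn' dn E ∧ EqOn up' up E := by
  by_cases htE : t ∈ E
  · exact ⟨dn, up, by rwa [insert_eq_of_mem htE], eqOn_refl _ _, eqOn_refl _ _⟩
  obtain ⟨-, hα, hβ, -⟩ := id h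
  obtain ⟨r, hr, s, hs, hrt, hts, hgap⟩ := hE.exists_gap_around hα ht.1 hβ ht.2 htE
  exact h.exists_insert_of_gap hX hr hs hrt hts hgap

lemma IsDraft.iUnion {E : ℕ → Set ℝ} (hE : Monotone E) {dn up : ℕ → ℝ → Set X}
    (h : ∀ n, IsDraft ζ α β (E n) (dn n) (up n)) (hdn : ∀ n, EqOn (dn (n + 1)) (dn n) (E n))
    (hup : ∀ n, EqOn (up (n + 1)) (up n) (E n)) :
    ∃ dn' up', IsDraft ζ α β (⋃ n, E n) dn' up' ∧ EqOn dn' (dn 0) (E 0) ∧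
      EqOn up' (up 0) (E 0) := by
  classical
  let N : ℝ → ℕ := fun r => if hr : ∃ n, r ∈ E n then hr.choose else 0
  have hN : ∀ r ∈ ⋃ n, E n, r ∈ E (N r) := fun r hr => by
    simp only [N, dif_pos (mem_iUnion.1 hr)]
    exact (mem_iUnion.1 hr).choose_spec
  have hk : ∀ r ∈ ⋃ n, E n, ∀ k, N r ≤ k →
      r ∈ E k ∧ dn k r = dn (N r) r ∧ up k r = up (N r) r := fun r hr k hk =>
    ⟨hE hk (hN r hr), Monotone.eqOn_of_le hE hdn hk (hN r hr),
      Monotone.eqOn_of_le hE hup hk (hN r hr)⟩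
  refine ⟨fun r => dn (N r) r, fun r => up (N r) r, ?_,
    fun r hr => Monotone.eqOn_of_le hE hdn (Nat.zero_le (N r)) hr,
    fun r hr => Monotone.eqOn_of_le hE hup (Nat.zero_le (N r)) hr⟩
  obtain ⟨-, hα, hβ, -⟩ := h 0
  refine ⟨iUnion_subset fun n => (h n).1, mem_iUnion.2 ⟨0, hα⟩, mem_iUnion.2 ⟨0, hβ⟩,
    fun r hr => ?_, fun r hr => ?_, ?_, ?_, fun r hr => ?_, fun r hr s hs hrs => ?_,
    fun r hr s hs hrs => ?_⟩
  · obtain ⟨-, -, -, hdc, -⟩ := h (N r)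
    exact hdc r (hN r hr)
  · obtain ⟨-, -, -, -, huc, -⟩ := h (N r)
    exact huc r (hN r hr)
  · obtain ⟨-, -, -, -, -, hupα, -⟩ := h (N α)
    exact hupα
  · obtain ⟨-, -, -, -, -, -, hdnβ, -⟩ := h (N β)
    exact hdnβ
  · obtain ⟨-, -, -, -, -, -, -, hcov, -⟩ := h (N r)
    exact hcov r (hN r hr)
  all_goals
    obtain ⟨hrk, hdr, hur⟩ := hk r hr _ (le_max_left (N r) (N s))
    obtain ⟨hsk, hds, hus⟩ := hk s hs _ (le_max_right (N r) (N s))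
    obtain ⟨-, -, -, -, -, -, -, -, hdisj, hAC⟩ := h (max (N r) (N s))
    simp only [← hdr, ← hur, ← hds, ← hus]
  · exact hdisj r hrk s hsk hrs
  · exact hAC r hrk s hsk hrs

lemma IsDraft.exists_iUnion {E : ℕ → Set ℝ} (hE : Monotone E) (h : IsDraft ζ α β (E 0) dn up)
    (hstep : ∀ n dn up, IsDraft ζ α β (E n) dn up →
      ∃ dn' up', IsDraft ζ α β (E (n + 1)) dn' up' ∧ EqOn dn' dn (E n) ∧ EqOn up' up (E n)) :
    ∃ dn' up', IsDraft ζ α β (⋃ n, E n) dn' up' ∧ EqOn dn' dn (E 0) ∧ EqOn up' up (E 0) := by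
  choose! dnS upS hS using hstep
  let seq : ℕ → (ℝ → Set X) × (ℝ → Set X) :=
    fun n => Nat.rec (dn, up) (fun n p => (dnS n p.1 p.2, upS n p.1 p.2)) n
  have hseq : ∀ n, IsDraft ζ α β (E n) (seq n).1 (seq n).2 := by
    intro n
    induction n with
    | zero => exact h
    | succ n ih => exact (hS n _ _ ih).1
  exact IsDraft.iUnion hE hseq (fun n => (hS n _ _ (hseq n)).2.1)
    (fun n => (hS n _ _ (hseq n)).2.2)

lemma IsDraft.exists_dense_extension (hX : ANormal ζ) (h : IsDraft ζ α β E dn up)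
    (hE : IsClosed E) :
    ∃ E' dn' up', E ⊆ E' ∧ EqOn dn' dn E ∧ EqOn up' up E ∧ IsDraft ζ α β E' dn' up' ∧
      ∀ u v, α ≤ u → v ≤ β → u < v → (Ioo u v ∩ E').Nonempty := by
  obtain ⟨hsub, hα, -⟩ := id h
  obtain ⟨q, hq⟩ := TopologicalSpace.exists_dense_seq ℝ
  have hαβ : α ≤ β := (hsub hα).2
  let t : ℕ → ℝ := fun n => max α (min β (q n))
  have ht : ∀ n, t n ∈ Icc α β := fun n => ⟨le_max_left _ _, max_le hαβ (min_le_left _ _)⟩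
  let En : ℕ → Set ℝ := fun n => E ∪ t '' Iio n
  have hEn : Monotone En := fun m n hmn =>
    union_subset_union_right _ (image_mono (Iio_subset_Iio hmn))
  have hEn0 : En 0 = E := by simp [En]
  have hEnsucc : ∀ n, En (n + 1) = insert (t n) (En n) := by
    intro n
    ext x
    simp only [En, mem_union, mem_insert_iff, mem_image, mem_Iio, Nat.lt_succ_iff_lt_or_eq]
    aesop
  have hEnclosed : ∀ n, IsClosed (En n) := fun n => hE.union ((finite_Iio n).image t).isClosed
  obtain ⟨dn', up', hdraft, hdn, hup⟩ := IsDraft.exists_iUnion hEn (hEn0 ▸ h)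
    fun n dn up hn => hEnsucc n ▸ hn.exists_insert hX (hEnclosed n) (ht n)
  refine ⟨⋃ n, En n, dn', up', hEn0 ▸ subset_iUnion En 0, hEn0 ▸ hdn, hEn0 ▸ hup, hdraft,
    fun u v hu hv huv => ?_⟩
  obtain ⟨n, hn⟩ := hq.exists_mem_open isOpen_Ioo (nonempty_Ioo.2 huv)
  have htn : t n = q n := by
    simp only [t, min_eq_right (hn.2.le.trans hv), max_eq_right (hu.trans hn.1.le)]
  exact ⟨t n, htn ▸ hn, mem_iUnion.2 ⟨n + 1, hEnsucc n ▸ mem_insert _ _⟩⟩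

end Extension

section Realisation

variable {X : Type*} [TopologicalSpace X] {ζ : X → ℕ} {α β : ℝ} {E : Set ℝ}
  {dn up : ℝ → Set X}

noncomputable def draftSup (E : Set ℝ) (up : ℝ → Set X) (x : X) : ℝ :=
  sSup {r ∈ E | x ∈ up r}

namespace IsDraft

lemma le_draftSup (h : IsDraft ζ α β E dn up) {r : ℝ} (hr : r ∈ E) {x : X} (hx : x ∈ up r) :
    r ≤ draftSup E up x :=
  le_csSup ⟨β, fun _ hs => (h.1 hs.1).2⟩ ⟨hr, hx⟩

lemma draftSup_le (h : IsDraft ζ α β E dn up) {r : ℝ} (hr : r ∈ E) {x : X} (hx : x ∈ dn r) :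
    draftSup E up x ≤ r := by
  obtain ⟨-, hα, -, -, -, hupα, -, -, hdisj, -⟩ := h
  refine csSup_le ⟨α, hα, hupα ▸ mem_univ x⟩ fun s ⟨hs, hxs⟩ => not_lt.1 fun hrs => ?_
  exact ((hdisj r hr s hs hrs).subset ⟨hx, hxs⟩ : x ∈ (∅ : Set X))

lemma draftSup_mem_Icc (h : IsDraft ζ α β E dn up) (x : X) : draftSup E up x ∈ Icc α β := by
  obtain ⟨-, hα, hβ, -, -, hupα, hdnβ, -⟩ := id h
  exact ⟨h.le_draftSup hα (hupα ▸ mem_univ x), h.draftSup_le hβ (hdnβ ▸ mem_univ x)⟩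

lemma mem_up_of_lt_draftSup (h : IsDraft ζ α β E dn up) {r : ℝ} (hr : r ∈ E) {x : X}
    (hlt : r < draftSup E up x) : x ∈ up r := by
  obtain ⟨-, -, -, -, -, -, -, hcov, -⟩ := id h
  exact (eq_univ_iff_forall.1 (hcov r hr) x).resolve_left fun hx =>
    (h.draftSup_le hr hx).not_gt hlt

lemma mem_down_of_draftSup_lt (h : IsDraft ζ α β E dn up) {r : ℝ} (hr : r ∈ E) {x : X}
    (hlt : draftSup E up x < r) : x ∈ dn r := by
  obtain ⟨-, -, -, -, -, -, -, hcov, -⟩ := id h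
  exact (eq_univ_iff_forall.1 (hcov r hr) x).resolve_right fun hx =>
    (h.le_draftSup hr hx).not_gt hlt

lemma continuous_draftSup (h : IsDraft ζ α β E dn up)
    (hdense : ∀ u v, α ≤ u → v ≤ β → u < v → (Ioo u v ∩ E).Nonempty) :
    Continuous (draftSup E up) := by
  obtain ⟨-, -, -, hdc, huc, -⟩ := id h
  have hf := h.draftSup_mem_Icc
  refine continuous_iff_continuousAt.2 fun x => tendsto_order.2 ⟨fun a ha => ?_, fun b hb => ?_⟩
  · rcases (hf x).1.eq_or_lt with hα | hα
    · exact Filter.Eventually.of_forall fun y => ha.trans_le (hα ▸ (hf y).1)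
    obtain ⟨r, ⟨har, hrx⟩, hr⟩ := hdense _ _ (le_max_right a α) (hf x).2 (max_lt ha hα)
    filter_upwards [(hdc r hr).isOpen_compl.mem_nhds
      fun hx => (h.draftSup_le hr hx).not_gt hrx] with y hy
    exact (max_lt_iff.1 har).1.trans_le
      (not_lt.1 fun hyr => hy (h.mem_down_of_draftSup_lt hr hyr))
  · rcases (hf x).2.eq_or_lt with hβ | hβ
    · exact Filter.Eventually.of_forall fun y => (hβ ▸ (hf y).2).trans_lt hb
    obtain ⟨r, ⟨hxr, hrb⟩, hr⟩ := hdense _ _ (hf x).1 (min_le_right b β) (lt_min hb hβ)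
    filter_upwards [(huc r hr).isOpen_compl.mem_nhds
      fun hx => (h.le_draftSup hr hx).not_gt hxr] with y hy
    exact (not_lt.1 fun hry => hy (h.mem_up_of_lt_draftSup hr hry)).trans_lt
      (lt_min_iff.1 hrb).1

lemma den_draftSup_dvd (h : IsDraft ζ α β E dn up)
    (hdense : ∀ u v, α ≤ u → v ≤ β → u < v → (Ioo u v ∩ E).Nonempty) (x : X) :
    den (draftSup E up x) ∣ ζ x := by
  obtain ⟨-, hα, hβ, -, -, hupα, hdnβ, -, -, hAC⟩ := id h
  set f := draftSup E up
  show f x ∈ {l : ℝ | den l ∣ ζ x}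
  rw [← (isClosed_setOf_den_dvd (ζ x)).closure_eq, Metric.mem_closure_iff]
  intro ε hε
  obtain ⟨r, ⟨hr, hxr⟩, hεr⟩ := exists_lt_of_lt_csSup (s := {r ∈ E | x ∈ up r})
    ⟨α, hα, hupα ▸ mem_univ x⟩ (sub_lt_self (f x) hε)
  obtain ⟨s, hs, hxs, hsε⟩ : ∃ s ∈ E, x ∈ dn s ∧ s < f x + ε := by
    rcases (h.draftSup_mem_Icc x).2.lt_or_eq with hlt | heq
    · obtain ⟨s, ⟨hxs, hsε⟩, hs⟩ := hdense _ _ (h.draftSup_mem_Icc x).1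
        (min_le_right (f x + ε) β) (lt_min (by linarith) hlt)
      exact ⟨s, hs, h.mem_down_of_draftSup_lt hs hxs, hsε.trans_le (min_le_left _ _)⟩
    · exact ⟨β, hβ, hdnβ ▸ mem_univ x, by linarith⟩
  have hrx := h.le_draftSup hr hxr
  have hxs' := h.draftSup_le hs hxs
  obtain ⟨l, hl, hld⟩ : x ∈ AC ζ (Icc r s) := hAC r hr s hs (hrx.trans hxs') ⟨hxr, hxs⟩
  refine ⟨l, hld, ?_⟩
  rw [Real.dist_eq, abs_lt]
  constructor <;> linarith [hl.1, hl.2]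

lemma exists_realisation_of_dense (h : IsDraft ζ α β E dn up)
    (hdense : ∀ u v, α ≤ u → v ≤ β → u < v → (Ioo u v ∩ E).Nonempty) :
    ∃ f : X → ℝ, IsRealisation α β E dn up f ∧ Continuous f ∧ ∀ x, den (f x) ∣ ζ x :=
  ⟨draftSup E up, ⟨h.draftSup_mem_Icc, fun _ hr =>
    ⟨fun x hx => ⟨(h.draftSup_mem_Icc x).1, h.draftSup_le hr hx⟩,
      fun x hx => ⟨h.le_draftSup hr hx, (h.draftSup_mem_Icc x).2⟩⟩⟩,
    h.continuous_draftSup hdense, h.den_draftSup_dvd hdense⟩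

end IsDraft

end Realisation

lemma IsRealisation.mono {X : Type*} {α β : ℝ} {D E : Set ℝ} {dn up dn' up' : ℝ → Set X}
    {f : X → ℝ} (hf : IsRealisation α β E dn' up' f) (hDE : D ⊆ E) (hdn : EqOn dn' dn D)
    (hup : EqOn up' up D) : IsRealisation α β D dn up f :=
  ⟨hf.1, fun r hr => by rw [← hdn hr, ← hup hr]; exact hf.2 r (hDE hr)⟩

theorem draft_closed_has_realisation_general
    {X : Type*} [TopologicalSpace X] (ζ : X → ℕ) (hX : ANormal ζ)
    (α β : ℝ) (D : Set ℝ) (down up : ℝ → Set X)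
    (h : IsDraft ζ α β D down up) (hDclosed : IsClosed D) :
    ∃ f : X → ℝ, IsRealisation α β D down up f ∧ Continuous f ∧
      ∀ x : X, den (f x) ∣ ζ x := by
  obtain ⟨E, dn, up', hDE, hdn, hup, hE, hdense⟩ := h.exists_dense_extension hX hDclosed
  obtain ⟨f, hf, hfc, hfden⟩ := hE.exists_realisation_of_dense hdense
  exact ⟨f, hf.mono hDE hdn hup, hfc, hfden⟩

/-- Any draft on a closed subset `D ⊆ ℝ` of an a-normal space admits a
continuous, denominator-decreasing realisation. -/
theorem draft_closed_has_realisation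
    {X : Type*} [TopologicalSpace X] (ζ : X → ℕ) (hX : ANormal ζ)
    (α β : ℝ) (hαβ : α ≤ β) (D : Set ℝ) (down up : ℝ → Set X)
    (h : IsDraft ζ α β D down up) (hDclosed : IsClosed D) :
    ∃ f : X → ℝ, IsRealisation α β D down up f ∧ Continuous f ∧
      ∀ x : X, den (f x) ∣ ζ x :=
  draft_closed_has_realisation_general ζ hX α β D down up h hDclosed
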